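/- arXiv:1104.2671 — 2 statements merged into one kernel-verified Lean document; each statement's English description precedes it below -/
import Mathlib

section
/- Let (γ_j)_{j=1}^n be real numbers with γ_{j+1} − γ_j ≥ 1 for all j. Then there is an absolute constant c such that for every interval I ⊂ ℝ and every finite sequence (α_j) ⊂ ℂ, ∫_I |∑_j α_j e^{2πi γ_j y}|² dy ≤ c · max(|I|, 1) · ∑_j |α_j|². -/
/-!
Majorize the indicator of a unit interval centred at `s` by `exp (π/4) · exp (-π (y - s)²)`.
Since the Gaussian is its own Fourier transform, integrating it against
`|∑ α_j e^{2πiγ_j y}|²` over all of `ℝ` gives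
`∑_{j,k} α_j conj(α_k) e^{2πi(γ_j - γ_k)s} e^{-π(γ_j - γ_k)²}`. The gaps give
`|γ_j - γ_k| ≥ |j - k|`, so each row of the kernel `e^{-π(γ_j - γ_k)²}` sums to at most
`θ = ∑_{m ∈ ℤ} e^{-πm²}`, and Schur's test bounds the double sum by `θ ∑ |α_j|²`.
Finally `[a, b]` is covered by `⌈b - a⌉ ≤ 2 max (b - a) 1` unit intervals.
-/

open Finset MeasureTheory Real Complex ComplexConjugate

noncomputable def expSum {ι : Type*} [Fintype ι] (α : ι → ℂ) (γ : ι → ℝ) (y : ℝ) : ℂ :=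
  ∑ j, α j * cexp (2 * π * I * γ j * y)

theorem norm_cexp_two_pi_I_mul_mul (x y : ℝ) : ‖cexp (2 * π * I * x * y)‖ = 1 := by
  rw [show 2 * π * I * x * y = ((2 * π * x * y : ℝ) : ℂ) * I by push_cast; ring,
    norm_exp_ofReal_mul_I]

theorem integral_gaussian_mul_cexp (s δ : ℝ) :
    ∫ y : ℝ, (rexp (-π * (y - s) ^ 2) : ℂ) * cexp (2 * π * I * δ * y)
      = cexp (2 * π * I * δ * s) * rexp (-π * δ ^ 2) := by
  have h (y : ℝ) : (rexp (-π * (y - s) ^ 2) : ℂ) * cexp (2 * π * I * δ * y)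
      = cexp (-π * (y : ℂ) ^ 2 + (2 * π * s + 2 * π * I * δ) * y + -π * s ^ 2) := by
    push_cast
    rw [← Complex.exp_add]
    ring_nf
  simp_rw [h]
  rw [integral_cexp_quadratic (by simp [pi_pos]), neg_neg, div_self (by simp [pi_ne_zero]),
    one_cpow, one_mul]
  push_cast
  rw [← Complex.exp_add]
  congr 1
  field_simp
  ring_nf
  rw [I_sq]
  ring

theorem integrable_gaussian_mul_cexp (s δ : ℝ) :
    Integrable fun y : ℝ => (rexp (-π * (y - s) ^ 2) : ℂ) * cexp (2 * π * I * δ * y) :=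
  Integrable.mul_bdd (c := 1) ((integrable_exp_neg_mul_sq pi_pos).comp_sub_right s).ofReal
    (by fun_prop) (ae_of_all _ fun y => (norm_cexp_two_pi_I_mul_mul δ y).le)

section expSum

variable {ι : Type*} [Fintype ι] (α : ι → ℂ) (γ : ι → ℝ)

theorem norm_expSum_le (y : ℝ) : ‖expSum α γ y‖ ≤ ∑ j, ‖α j‖ :=
  (norm_sum_le _ _).trans_eq <| sum_congr rfl fun j _ => by
    rw [norm_mul, norm_cexp_two_pi_I_mul_mul, mul_one]

@[fun_prop]
theorem continuous_expSum : Continuous (expSum α γ) := by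
  unfold expSum; fun_prop

theorem ofReal_norm_expSum_sq (y : ℝ) :
    ((‖expSum α γ y‖ ^ 2 : ℝ) : ℂ)
      = ∑ j, ∑ k, α j * conj (α k) * cexp (2 * π * I * (γ j - γ k : ℝ) * y) := by
  rw [Complex.ofReal_pow, ← Complex.mul_conj', expSum, map_sum, sum_mul_sum]
  refine sum_congr rfl fun j _ => sum_congr rfl fun k _ => ?_
  simp only [map_mul, ← Complex.exp_conj, conj_ofReal, conj_I, map_ofNat]
  rw [mul_mul_mul_comm, ← Complex.exp_add]
  push_cast
  ring_nf

theorem integrable_gaussian_mul_norm_expSum_sq (s : ℝ) :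
    Integrable fun y => rexp (-π * (y - s) ^ 2) * ‖expSum α γ y‖ ^ 2 := by
  refine Integrable.mul_bdd (c := (∑ j, ‖α j‖) ^ 2) ?_ (by fun_prop) (ae_of_all _ fun y => ?_)
  · exact (integrable_exp_neg_mul_sq pi_pos).comp_sub_right s
  · rw [norm_pow, norm_norm]
    exact pow_le_pow_left₀ (norm_nonneg _) (norm_expSum_le α γ y) 2

theorem integral_gaussian_mul_norm_expSum_sq_le (s : ℝ) :
    ∫ y, rexp (-π * (y - s) ^ 2) * ‖expSum α γ y‖ ^ 2
      ≤ ∑ j, ∑ k, ‖α j‖ * ‖α k‖ * rexp (-π * (γ j - γ k) ^ 2) := by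
  have hexpand : ((∫ y, rexp (-π * (y - s) ^ 2) * ‖expSum α γ y‖ ^ 2 : ℝ) : ℂ)
      = ∑ j, ∑ k, α j * conj (α k)
          * (cexp (2 * π * I * (γ j - γ k : ℝ) * s) * rexp (-π * (γ j - γ k) ^ 2)) := by
    rw [← integral_complex_ofReal]
    simp_rw [ofReal_mul, ofReal_norm_expSum_sq, mul_sum]
    have hint (j k : ι) : Integrable fun y : ℝ => (rexp (-π * (y - s) ^ 2) : ℂ)
        * (α j * conj (α k) * cexp (2 * π * I * (γ j - γ k : ℝ) * y)) := by
      simpa only [mul_left_comm] using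
        (integrable_gaussian_mul_cexp s (γ j - γ k)).const_mul (α j * conj (α k))
    rw [integral_finsetSum _ fun j _ => integrable_finsetSum _ fun k _ => hint j k]
    refine sum_congr rfl fun j _ => ?_
    rw [integral_finsetSum _ fun k _ => hint j k]
    refine sum_congr rfl fun k _ => ?_
    simp_rw [mul_left_comm _ (α j * conj (α k))]
    rw [integral_const_mul, integral_gaussian_mul_cexp]
  have hnonneg : 0 ≤ ∫ y, rexp (-π * (y - s) ^ 2) * ‖expSum α γ y‖ ^ 2 :=
    integral_nonneg fun y => by positivity
  rw [← norm_of_nonneg hnonneg, ← norm_real, hexpand]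
  refine (norm_sum_le _ _).trans (sum_le_sum fun j _ => (norm_sum_le _ _).trans_eq ?_)
  refine sum_congr rfl fun k _ => ?_
  rw [norm_mul, norm_mul, norm_mul, RCLike.norm_conj, norm_real, norm_of_nonneg (exp_nonneg _),
    norm_cexp_two_pi_I_mul_mul, one_mul]

end expSum

theorem sum_sum_mul_mul_le_of_sum_le {ι : Type*} [Fintype ι] {w : ι → ι → ℝ}
    (hw₀ : ∀ j k, 0 ≤ w j k) (hw : ∀ j k, w j k = w k j) {C : ℝ} (hC : ∀ j, ∑ k, w j k ≤ C)
    (x : ι → ℝ) :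
    ∑ j, ∑ k, x j * x k * w j k ≤ C * ∑ j, x j ^ 2 := by
  calc ∑ j, ∑ k, x j * x k * w j k
      ≤ ∑ j, ∑ k, (x j ^ 2 * w j k + x k ^ 2 * w k j) / 2 := by
        gcongr with j _ k _
        rw [hw k j]
        nlinarith [mul_nonneg (sq_nonneg (x j - x k)) (hw₀ j k)]
    _ = ∑ j, x j ^ 2 * ∑ k, w j k := by
        simp_rw [add_div, sum_add_distrib]
        rw [sum_comm (f := fun j k => x k ^ 2 * w k j / 2)]
        simp_rw [mul_sum, ← sum_add_distrib, add_halves]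
    _ ≤ ∑ j, x j ^ 2 * C := by gcongr with j; exact hC j
    _ = C * ∑ j, x j ^ 2 := by rw [← sum_mul, mul_comm]

theorem integral_unit_norm_expSum_sq_le {ι : Type*} [Fintype ι] (α : ι → ℂ) (γ : ι → ℝ)
    {C : ℝ} (hC : ∀ j, ∑ k, rexp (-π * (γ j - γ k) ^ 2) ≤ C) (t : ℝ) :
    ∫ y in t..t + 1, ‖expSum α γ y‖ ^ 2 ≤ rexp (π / 4) * C * ∑ j, ‖α j‖ ^ 2 := by
  set s := t + 1 / 2 with hs
  have hmajor : ∀ y ∈ Set.Icc t (t + 1),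
      ‖expSum α γ y‖ ^ 2 ≤ rexp (π / 4) * (rexp (-π * (y - s) ^ 2) * ‖expSum α γ y‖ ^ 2) := by
    rintro y ⟨hty, hyt⟩
    have hsq : (y - s) ^ 2 ≤ 1 / 4 := by rw [hs]; nlinarith
    have hone : 1 ≤ rexp (π / 4) * rexp (-π * (y - s) ^ 2) := by
      rw [← Real.exp_add]
      exact one_le_exp (by nlinarith [pi_pos])
    rw [← mul_assoc]
    exact le_mul_of_one_le_left (by positivity) hone
  have hschur := sum_sum_mul_mul_le_of_sum_le (w := fun j k => rexp (-π * (γ j - γ k) ^ 2))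
    (fun _ _ => (exp_pos _).le) (fun j k => by rw [← neg_sub (γ j), neg_sq]) hC (‖α ·‖)
  calc ∫ y in t..t + 1, ‖expSum α γ y‖ ^ 2
      ≤ ∫ y in t..t + 1, rexp (π / 4) * (rexp (-π * (y - s) ^ 2) * ‖expSum α γ y‖ ^ 2) :=
        intervalIntegral.integral_mono_on (by linarith)
          ((by fun_prop : Continuous _).intervalIntegrable _ _)
          ((by fun_prop : Continuous _).intervalIntegrable _ _) hmajor
    _ ≤ rexp (π / 4) * ∫ y, rexp (-π * (y - s) ^ 2) * ‖expSum α γ y‖ ^ 2 := by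
        rw [intervalIntegral.integral_const_mul, intervalIntegral.integral_of_le (by linarith)]
        exact mul_le_mul_of_nonneg_left (setIntegral_le_integral
          (integrable_gaussian_mul_norm_expSum_sq α γ s) (ae_of_all _ fun y => by positivity))
          (exp_pos _).le
    _ ≤ rexp (π / 4) * (C * ∑ j, ‖α j‖ ^ 2) := by
        gcongr
        exact (integral_gaussian_mul_norm_expSum_sq_le α γ s).trans hschur
    _ = rexp (π / 4) * C * ∑ j, ‖α j‖ ^ 2 := by ring

def HasUnitGaps {n : ℕ} (γ : Fin n → ℝ) : Prop :=
  ∀ (j : ℕ) (hj : j + 1 < n), γ ⟨j + 1, hj⟩ - γ ⟨j, Nat.lt_of_succ_lt hj⟩ ≥ 1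

theorem HasUnitGaps.monotone_sub {n : ℕ} {γ : Fin n → ℝ} (hγ : HasUnitGaps γ) :
    Monotone fun j : Fin n => γ j - j := by
  cases n with
  | zero => exact fun j => j.elim0
  | succ n =>
    refine Fin.monotone_iff_le_succ.mpr fun j => ?_
    have : γ j.succ - γ j.castSucc ≥ 1 := hγ j (by omega)
    simp only [Fin.val_castSucc, Fin.val_succ, Nat.cast_add, Nat.cast_one]
    linarith

theorem HasUnitGaps.abs_sub_le {n : ℕ} {γ : Fin n → ℝ} (hγ : HasUnitGaps γ) (j k : Fin n) :
    |(j : ℝ) - k| ≤ |γ j - γ k| := by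
  wlog hkj : k ≤ j generalizing j k
  · rw [abs_sub_comm, abs_sub_comm (γ j)]
    exact this k j (le_of_not_ge hkj)
  have := hγ.monotone_sub hkj
  have hk : (k : ℝ) ≤ j := by exact_mod_cast hkj
  rw [abs_of_nonneg (sub_nonneg.mpr hk), abs_of_nonneg (by linarith)]
  linarith

theorem summable_exp_neg_pi_mul_int_sq : Summable fun m : ℤ => rexp (-π * m ^ 2) := by
  convert ((summable_jacobiTheta₂_term_iff 0 I).mpr (by simp)).norm using 2 with m
  simp [norm_jacobiTheta₂_term]

theorem HasUnitGaps.sum_exp_neg_pi_sq_le {n : ℕ} {γ : Fin n → ℝ} (hγ : HasUnitGaps γ)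
    (j : Fin n) :
    ∑ k, rexp (-π * (γ j - γ k) ^ 2) ≤ ∑' m : ℤ, rexp (-π * m ^ 2) := by
  calc ∑ k, rexp (-π * (γ j - γ k) ^ 2)
      ≤ ∑ k : Fin n, rexp (-π * (((j : ℤ) - k : ℤ) : ℝ) ^ 2) := by
        refine sum_le_sum fun k _ => exp_le_exp.mpr ?_
        have := sq_le_sq.mpr (hγ.abs_sub_le j k)
        push_cast
        nlinarith [pi_pos]
    _ ≤ ∑' m : ℤ, rexp (-π * m ^ 2) :=
        (tsum_fintype _).symm.trans_le <| tsum_comp_le_tsum_of_inj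
          summable_exp_neg_pi_mul_int_sq (fun _ => (exp_pos _).le)
          (i := fun k : Fin n => (j : ℤ) - k) fun k l h => by simpa [Fin.ext_iff] using h

theorem intervalIntegral_le_two_mul_max_of_unit_le {f : ℝ → ℝ}
    (hf : ∀ x y, IntervalIntegrable f volume x y) (hf₀ : ∀ y, 0 ≤ f y) {M : ℝ}
    (hM : ∀ t, ∫ y in t..t + 1, f y ≤ M) {a b : ℝ} (hab : a ≤ b) :
    ∫ y in a..b, f y ≤ 2 * max (b - a) 1 * M := by
  set N := ⌈b - a⌉₊
  have hM₀ : 0 ≤ M :=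
    (intervalIntegral.integral_nonneg (by linarith) fun y _ => hf₀ y).trans (hM 0)
  have hN : (N : ℝ) < b - a + 1 := Nat.ceil_lt_add_one (sub_nonneg.mpr hab)
  calc ∫ y in a..b, f y
      ≤ ∫ y in a..a + N, f y :=
        intervalIntegral.integral_mono_interval le_rfl hab (by linarith [Nat.le_ceil (b - a)])
          (ae_of_all _ hf₀) (hf _ _)
    _ = ∑ i ∈ range N, ∫ y in a + i..a + (i + 1 : ℕ), f y := by
        rw [intervalIntegral.sum_integral_adjacent_intervals fun k _ => hf _ _]
        simp
    _ ≤ ∑ i ∈ range N, M := sum_le_sum fun i _ => by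
        simpa only [Nat.cast_succ, add_assoc] using hM (a + i)
    _ = N * M := by rw [sum_const, card_range, nsmul_eq_mul]
    _ ≤ 2 * max (b - a) 1 * M := by
        gcongr
        linarith [le_max_left (b - a) 1, le_max_right (b - a) 1]

/-- Zygmund's inequality on Dirichlet series with gaps: if the real frequencies `γ_j`
satisfy `γ_{j+1} - γ_j ≥ 1`, then for every interval `[a,b]` and complex coefficients
`α_j`, `∫_a^b |∑ α_j e^{2πi γ_j y}|² dy ≤ c · max(b-a, 1) · ∑ |α_j|²` with an absolute
constant `c`. -/
theorem dirichlet_gap_inequality :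
    ∃ c : ℝ, 0 < c ∧
      ∀ (n : ℕ) (γ : Fin n → ℝ),
        (∀ (j : ℕ) (hj : j + 1 < n), γ ⟨j + 1, hj⟩ - γ ⟨j, Nat.lt_of_succ_lt hj⟩ ≥ 1) →
        ∀ (a b : ℝ), a ≤ b → ∀ α : Fin n → ℂ,
          (∫ y in a..b, ‖∑ j, α j * Complex.exp (2 * Real.pi * Complex.I * (γ j) * y)‖ ^ 2)
            ≤ c * max (b - a) 1 * ∑ j, ‖α j‖ ^ 2 := by
  have hθ : 0 < ∑' m : ℤ, rexp (-π * m ^ 2) :=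
    summable_exp_neg_pi_mul_int_sq.tsum_pos (fun _ => (exp_pos _).le) 0 (exp_pos _)
  refine ⟨2 * (rexp (π / 4) * ∑' m : ℤ, rexp (-π * m ^ 2)), by positivity, ?_⟩
  intro n γ hγ a b hab α
  have hunit := integral_unit_norm_expSum_sq_le α γ (HasUnitGaps.sum_exp_neg_pi_sq_le hγ)
  calc ∫ y in a..b, ‖expSum α γ y‖ ^ 2
      ≤ 2 * max (b - a) 1 * (rexp (π / 4) * (∑' m : ℤ, rexp (-π * m ^ 2)) * ∑ j, ‖α j‖ ^ 2) :=
        intervalIntegral_le_two_mul_max_of_unit_le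
          (fun x y => (by fun_prop : Continuous _).intervalIntegrable x y)
          (fun y => by positivity) hunit hab
    _ = _ := by ring
end

section
/- Fix the dyadic subintervals I_{j,k} = (a_{j,k}, a_{j,k+1}] of disjoint intervals I_j = (a_j, b_j] as in the LPR construction, and let c_{j,k} = a_{j,k} + 2^{k−1} = a_j − 2 + 2^k + 2^{k−1}. Then for each fixed k, the points c_{j,k} for distinct j satisfy |c_{j,k} − c_{j',k}| ≥ 2^k whenever j ≠ j' and both indices are defined (k ≤ min(n_j, n_{j'})). -/
/-!
The centres `c_{j,k}` and `c_{j',k}` differ by `a_j - a_{j'}`, and the left endpoints of two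
disjoint intervals are at least as far apart as the length of one of them. Since
`2^(k+1) ≤ 2^(n_j+1) ≤ |I_j| + 4` and `|I_j| ≥ 4`, every `I_j` with `k ≤ n_j` has length at least
`2^k`.
-/

open Set

lemma le_abs_sub_of_disjoint_Ioc {a b a' b' d : ℝ} (h : Disjoint (Ioc a b) (Ioc a' b'))
    (hd : d ≤ b - a) (hd' : d ≤ b' - a') : d ≤ |a - a'| := by
  rw [Ioc_disjoint_Ioc] at h
  rcases min_le_iff.mp h with hb | hb <;> rcases le_max_iff.mp hb with h' | h' <;>
    linarith [le_abs_self (a - a'), neg_abs_le (a - a')]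

lemma two_pow_le_of_two_pow_succ_le {x : ℝ} {k : ℕ} (hx : 4 ≤ x) (hk : 2 ^ (k + 1) ≤ x + 4) :
    (2 : ℝ) ^ k ≤ x := by
  rcases le_total ((2 : ℝ) ^ k) 4 with h | h
  · linarith
  · linarith [pow_succ (2 : ℝ) k]

theorem modulation_centres_gap_general (a b : ℕ → ℝ)
    (hdisj : Pairwise fun j j' => Disjoint (Ioc (a j) (b j)) (Ioc (a j') (b j')))
    (hlen : ∀ j, b j - a j ≥ 4)
    (n : ℕ → ℕ)
    (hn : ∀ j, (2 : ℝ) ^ (n j + 1) ≤ b j - a j + 4)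
    (c : ℕ → ℕ → ℝ) (hc : ∀ j k, c j k = a j - 2 + 2 ^ k + 2 ^ (k - 1)) :
    ∀ j j' k, j ≠ j' → 1 ≤ k → k ≤ n j → k ≤ n j' →
      |c j k - c j' k| ≥ 2 ^ k := by
  intro j j' k hne _ hkj hkj'
  have hlong : ∀ i, k ≤ n i → (2 : ℝ) ^ k ≤ b i - a i := fun i hki =>
    two_pow_le_of_two_pow_succ_le (hlen i)
      ((pow_le_pow_right₀ one_le_two (Nat.succ_le_succ hki)).trans (hn i))
  have hcentre : c j k - c j' k = a j - a j' := by rw [hc, hc]; ring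
  rw [hcentre]
  exact le_abs_sub_of_disjoint_Ioc (hdisj hne) (hlong j hkj) (hlong j' hkj')

/-- The gap estimate (4.4): for pairwise disjoint intervals `I_j = (a_j, b_j]` of length
`≥ 4`, with `n_j` maximal such that `2^(n_j+1) ≤ b_j - a_j + 4`, the modulation centres
`c_{j,k} = a_j - 2 + 2^k + 2^{k-1}` satisfy `|c_{j,k} - c_{j',k}| ≥ 2^k` for `j ≠ j'`
and `1 ≤ k ≤ min(n_j, n_{j'})`. -/
theorem modulation_centres_gap (a b : ℕ → ℝ)
    (hdisj : Pairwise fun j j' => Disjoint (Ioc (a j) (b j)) (Ioc (a j') (b j')))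
    (hlen : ∀ j, b j - a j ≥ 4)
    (n : ℕ → ℕ)
    (hn : ∀ j, (2 : ℝ) ^ (n j + 1) ≤ b j - a j + 4)
    (hmax : ∀ j, ∀ m : ℕ, (2 : ℝ) ^ (m + 1) ≤ b j - a j + 4 → m ≤ n j)
    (c : ℕ → ℕ → ℝ) (hc : ∀ j k, c j k = a j - 2 + 2 ^ k + 2 ^ (k - 1)) :
    ∀ j j' k, j ≠ j' → 1 ≤ k → k ≤ n j → k ≤ n j' →
      |c j k - c j' k| ≥ 2 ^ k :=
  modulation_centres_gap_general a b hdisj hlen n hn c hc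
end
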